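/- arXiv:2510.16312 — 3 statements merged into one kernel-verified Lean document; each statement's English description precedes it below -/
import Mathlib

section
/- Let C ≥ 2 be an integer, let H be a finite nonempty index set, let w : H → ℝ be nonnegative weights with Σ_{h∈H} w(h) = 1, and for each h ∈ H let p_h be a probability mass function on a finite state space with C elements. Set S = Σ_{h∈H} w(h)·H(p_h) (the average entropy) and Π = Σ_{h∈H} w(h)·max_z p_h(z) (the average predictability). If Π^max ∈ [1/C, 1] satisfies S_F(Π^max) = S, then Π ≤ Π^max; that is, the solution of the Fano equation is an upper bound on the true predictability. -/
/-- The Fano function `S_F(p) = -p·log₂ p - (1-p)·log₂(1-p) + (1-p)·log₂(C-1)`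
(with the convention `0·log₂ 0 = 0`, which holds automatically since `Real.logb 2 0 = 0`). -/
noncomputable def fanoFn (C : ℕ) (p : ℝ) : ℝ :=
  -p * Real.logb 2 p - (1 - p) * Real.logb 2 (1 - p) + (1 - p) * Real.logb 2 ((C : ℝ) - 1)

section FanoAux
open Real Finset

-- Jensen for negMulLog: sum of negMulLog over a finset is at most negMulLog of sum + sum * log card
lemma sum_negMulLog_le {Z : Type*} (t : Finset Z) (a : Z → ℝ) (h0 : ∀ i ∈ t, 0 ≤ a i) :
    ∑ i ∈ t, Real.negMulLog (a i) ≤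
      Real.negMulLog (∑ i ∈ t, a i) + (∑ i ∈ t, a i) * Real.log t.card := by
  set s := ∑ i ∈ t, a i with hs
  rcases eq_or_lt_of_le (Finset.sum_nonneg h0) with h | hspos
  · have hall : ∀ i ∈ t, a i = 0 := by
      intro i hi
      exact le_antisymm (by
        have := Finset.single_le_sum h0 hi
        linarith [this]) (h0 i hi)
    have : ∑ i ∈ t, Real.negMulLog (a i) = 0 := by
      apply Finset.sum_eq_zero; intro i hi; rw [hall i hi]; simp [Real.negMulLog]
    rw [this]
    have hs0 : s = 0 := by rw [hs, ← h]
    rw [hs0]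
    simp [Real.negMulLog]
  · have htne : t.Nonempty := by
      by_contra hne
      rw [Finset.not_nonempty_iff_eq_empty] at hne
      rw [hne] at hspos; simp at hspos
    have hn : (0:ℝ) < t.card := by exact_mod_cast Finset.card_pos.mpr htne
    have hjensen := Real.concaveOn_negMulLog.le_map_sum
      (w := fun _ => (t.card : ℝ)⁻¹) (p := a) (t := t)
      (fun i _ => by positivity)
      (by simp [Finset.sum_const]; field_simp)
      (fun i hi => Set.mem_Ici.mpr (h0 i hi))
    simp only [smul_eq_mul, ← Finset.mul_sum] at hjensen
    have key : ∑ i ∈ t, Real.negMulLog (a i) ≤ t.card * Real.negMulLog ((t.card:ℝ)⁻¹ * s) := by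
      calc ∑ i ∈ t, Real.negMulLog (a i)
          = t.card * ((t.card:ℝ)⁻¹ * ∑ i ∈ t, Real.negMulLog (a i)) := by field_simp
        _ ≤ t.card * Real.negMulLog ((t.card:ℝ)⁻¹ * s) := by
            apply mul_le_mul_of_nonneg_left hjensen hn.le
    refine key.trans_eq ?_
    rw [Real.negMulLog, Real.negMulLog, Real.log_mul (by positivity) hspos.ne',
      Real.log_inv]
    field_simp
    ring

lemma fanoFn_eq (C : ℕ) (p : ℝ) :
    fanoFn C p = Real.qaryEntropy C (1 - p) / Real.log 2 := by
  have h2 : Real.log 2 ≠ 0 := (Real.log_pos one_lt_two).ne'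
  unfold fanoFn
  rw [Real.qaryEntropy, Real.binEntropy]
  push_cast
  rw [Real.logb, Real.logb, Real.logb, Real.log_inv, Real.log_inv]
  field_simp
  ring

lemma fanoFn_concave (C : ℕ) : ConcaveOn ℝ (Set.Icc (0:ℝ) 1) (fanoFn C) := by
  have hq := (Real.strictConcaveOn_qaryEntropy (q := C)).concaveOn
  refine ⟨convex_Icc 0 1, ?_⟩
  intro x hx y hy a b ha hb hab
  obtain ⟨hx0, hx1⟩ := hx
  obtain ⟨hy0, hy1⟩ := hy
  have hx' : 1 - x ∈ Set.Icc (0:ℝ) 1 := ⟨by linarith, by linarith⟩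
  have hy' : 1 - y ∈ Set.Icc (0:ℝ) 1 := ⟨by linarith, by linarith⟩
  have h := hq.2 hx' hy' ha hb hab
  simp only [smul_eq_mul] at h ⊢
  have hrw : a * (1-x) + b * (1-y) = 1 - (a*x + b*y) := by linear_combination hab
  rw [hrw] at h
  rw [fanoFn_eq, fanoFn_eq, fanoFn_eq]
  have hlog2 : (0:ℝ) < Real.log 2 := Real.log_pos one_lt_two
  calc a * (Real.qaryEntropy C (1-x) / Real.log 2) + b * (Real.qaryEntropy C (1-y) / Real.log 2)
      = (a * Real.qaryEntropy C (1-x) + b * Real.qaryEntropy C (1-y)) / Real.log 2 := by ring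
    _ ≤ Real.qaryEntropy C (1 - (a*x + b*y)) / Real.log 2 := by gcongr

lemma fanoFn_strictAnti (C : ℕ) (hC : 2 ≤ C) :
    StrictAntiOn (fanoFn C) (Set.Icc (1/(C:ℝ)) 1) := by
  intro x hx y hy hxy
  obtain ⟨hx0, hx1⟩ := hx
  obtain ⟨hy0, hy1⟩ := hy
  rw [fanoFn_eq, fanoFn_eq]
  have h1 : (1:ℝ) - y ∈ Set.Icc (0:ℝ) (1 - 1/(C:ℝ)) := ⟨by linarith, by linarith⟩
  have h2 : (1:ℝ) - x ∈ Set.Icc (0:ℝ) (1 - 1/(C:ℝ)) := ⟨by linarith, by linarith⟩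
  have := Real.qaryEntropy_strictMonoOn hC h1 h2 (by linarith)
  have hlog2 : (0:ℝ) < Real.log 2 := Real.log_pos one_lt_two
  exact div_lt_div_of_pos_right this hlog2

lemma fano_pointwise {Z : Type*} [Fintype Z] [Nonempty Z] (C : ℕ) (hC : 2 ≤ C)
    (hcard : Fintype.card Z = C) (a : Z → ℝ) (h0 : ∀ z, 0 ≤ a z) (h1 : ∑ z, a z = 1) :
    ∑ z, Real.negMulLog (a z) ≤
      Real.qaryEntropy C (1 - Finset.univ.sup' Finset.univ_nonempty a) := by
  classical
  obtain ⟨z₀, -, hz₀⟩ := Finset.exists_mem_eq_sup' (Finset.univ_nonempty (α := Z)) a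
  set m := Finset.univ.sup' Finset.univ_nonempty a with hm
  have hsplit : ∀ f : Z → ℝ, ∑ z, f z = f z₀ + ∑ z ∈ Finset.univ.erase z₀, f z := by
    intro f
    rw [Finset.add_sum_erase _ f (Finset.mem_univ z₀)]
  have hrest : ∑ z ∈ Finset.univ.erase z₀, a z = 1 - m := by
    have := hsplit a
    rw [h1, ← hz₀] at this
    linarith
  have hcard' : ((Finset.univ.erase z₀).card : ℝ) = (C:ℝ) - 1 := by
    rw [Finset.card_erase_of_mem (Finset.mem_univ z₀), Finset.card_univ, hcard]
    have : 1 ≤ C := by omega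
    push_cast [Nat.cast_sub this]
    ring
  have hkey := sum_negMulLog_le (Finset.univ.erase z₀) a (fun i _ => h0 i)
  rw [hrest, hcard'] at hkey
  have : ∑ z, Real.negMulLog (a z)
      = Real.negMulLog m + ∑ z ∈ Finset.univ.erase z₀, Real.negMulLog (a z) := by
    rw [hsplit (fun z => Real.negMulLog (a z)), hz₀]
  rw [this, Real.qaryEntropy, Real.binEntropy_eq_negMulLog_add_negMulLog_one_sub]
  push_cast
  have : (1:ℝ) - (1 - m) = m := by ring
  rw [this]
  linarith

end FanoAux

/-- With `S` the average entropy and `Pbar` the average predictability of a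
family of pmfs `p h` on a `C`-element state space (weighted by a pmf `w` on histories), any
`Pmax ∈ [1/C, 1]` solving the Fano equation `S_F(Pmax) = S` is an upper bound on the true
average predictability: `Pbar ≤ Pmax`. -/
theorem stmt_6 {H Z : Type*} [Fintype H] [Nonempty H] [Fintype Z] [Nonempty Z]
    (C : ℕ) (hC : 2 ≤ C) (hcard : Fintype.card Z = C)
    (w : H → ℝ) (hw0 : ∀ h, 0 ≤ w h) (hw1 : ∑ h, w h = 1)
    (p : H → Z → ℝ) (hp0 : ∀ h z, 0 ≤ p h z) (hp1 : ∀ h, ∑ z, p h z = 1)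
    (S Pbar Pmax : ℝ)
    (hS : S = ∑ h, w h * (-∑ z, p h z * Real.logb 2 (p h z)))
    (hPbar : Pbar = ∑ h, w h * Finset.univ.sup' Finset.univ_nonempty (p h))
    (hPmax : Pmax ∈ Set.Icc (1 / (C : ℝ)) 1)
    (heq : fanoFn C Pmax = S) :
    Pbar ≤ Pmax := by
  have hlog2 : (0:ℝ) < Real.log 2 := Real.log_pos one_lt_two
  set pr : H → ℝ := fun h => Finset.univ.sup' Finset.univ_nonempty (p h) with hpr
  have hCpos : (0:ℝ) < C := by positivity
  have hle1 : ∀ h, pr h ≤ 1 := by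
    intro h
    apply Finset.sup'_le
    intro z _
    calc p h z ≤ ∑ z', p h z' := Finset.single_le_sum (fun z' _ => hp0 h z') (Finset.mem_univ z)
      _ = 1 := hp1 h
  have hgeC : ∀ h, 1/(C:ℝ) ≤ pr h := by
    intro h
    have h1 : (1:ℝ) ≤ C * pr h := by
      calc (1:ℝ) = ∑ z, p h z := (hp1 h).symm
        _ ≤ ∑ _z : Z, pr h := Finset.sum_le_sum
            (fun z _ => Finset.le_sup' (p h) (Finset.mem_univ z))
        _ = C * pr h := by rw [Finset.sum_const, Finset.card_univ, hcard]; simp [mul_comm]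
    rw [div_le_iff₀ hCpos] at *
    nlinarith
  have hPbar_mem : Pbar ∈ Set.Icc (1/(C:ℝ)) 1 := by
    constructor
    · calc 1/(C:ℝ) = ∑ h, w h * (1/(C:ℝ)) := by
            rw [← Finset.sum_mul, hw1, one_mul]
        _ ≤ ∑ h, w h * pr h :=
            Finset.sum_le_sum (fun h _ => mul_le_mul_of_nonneg_left (hgeC h) (hw0 h))
        _ = Pbar := hPbar.symm
    · calc Pbar = ∑ h, w h * pr h := hPbar
        _ ≤ ∑ h, w h * 1 :=
            Finset.sum_le_sum (fun h _ => mul_le_mul_of_nonneg_left (hle1 h) (hw0 h))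
        _ = 1 := by simp [hw1]
  -- pointwise Fano in logb form
  have hfano : ∀ h, (-∑ z, p h z * Real.logb 2 (p h z)) ≤ fanoFn C (pr h) := by
    intro h
    have hent : (-∑ z, p h z * Real.logb 2 (p h z))
        = (∑ z, Real.negMulLog (p h z)) / Real.log 2 := by
      rw [← Finset.sum_neg_distrib, Finset.sum_div]
      apply Finset.sum_congr rfl
      intro z _
      rw [Real.negMulLog, Real.logb]
      ring
    rw [hent, fanoFn_eq]
    have := fano_pointwise C hC hcard (p h) (hp0 h) (hp1 h)
    exact (div_le_div_iff_of_pos_right hlog2).mpr this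
  have step1 : S ≤ ∑ h, w h * fanoFn C (pr h) := by
    rw [hS]
    exact Finset.sum_le_sum (fun h _ => mul_le_mul_of_nonneg_left (hfano h) (hw0 h))
  have step2 : ∑ h, w h * fanoFn C (pr h) ≤ fanoFn C Pbar := by
    have := (fanoFn_concave C).le_map_sum (t := Finset.univ) (w := w) (p := pr)
      (fun h _ => hw0 h) (by simpa using hw1)
      (fun h _ => ⟨le_trans (by positivity) (hgeC h), hle1 h⟩)
    simp only [smul_eq_mul] at this
    rw [hPbar]
    exact this
  by_contra hlt
  push_neg at hlt
  have hfinal := fanoFn_strictAnti C hC hPmax hPbar_mem hlt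
  rw [heq] at hfinal
  linarith
end

section
/- Let C_r and C_s be integers with 2 ≤ C_r ≤ C_s, let S ≥ 0 be a real number, and write S_F(·;C) for the Fano function with candidate-set size C. If Π_r ∈ [1/C_r, 1] satisfies S_F(Π_r; C_r) = S and Π_s ∈ [1/C_s, 1] satisfies S_F(Π_s; C_s) = S, then Π_r ≤ Π_s. (Replacing the candidate-set size by a smaller one, e.g., the number of reachable locations C_r instead of the number of distinct visited locations C_s, tightens the Fano predictability upper bound: Π^max_{C_r} ≤ Π^max_{C_s}.) -/
open Real

lemma fanoFn_eq_qaryEntropy (C : ℕ) (p : ℝ) : fanoFn C p = qaryEntropy C (1 - p) / log 2 := by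
  simp only [fanoFn, qaryEntropy, binEntropy, logb, log_inv, sub_sub_cancel]
  push_cast
  ring

lemma qaryEntropy_le_qaryEntropy_of_le {q q' : ℕ} (hq : 2 ≤ q) (hqq' : q ≤ q') {p : ℝ}
    (hp : 0 ≤ p) : qaryEntropy q p ≤ qaryEntropy q' p := by
  have hq₁ : (0 : ℝ) < q - 1 := by
    rw [sub_pos]
    exact_mod_cast hq
  have hqq'ℝ : (q : ℝ) ≤ q' := by exact_mod_cast hqq'
  unfold qaryEntropy
  push_cast
  gcongr

lemma fanoFn_le_fanoFn_of_le {C C' : ℕ} (hC : 2 ≤ C) (hCC' : C ≤ C') {p : ℝ} (hp : p ≤ 1) :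
    fanoFn C p ≤ fanoFn C' p := by
  rw [fanoFn_eq_qaryEntropy, fanoFn_eq_qaryEntropy]
  gcongr
  exact qaryEntropy_le_qaryEntropy_of_le hC hCC' (by linarith)

lemma fanoFn_strictAntiOn {C : ℕ} (hC : 2 ≤ C) :
    StrictAntiOn (fanoFn C) (Set.Icc (1 / (C : ℝ)) 1) := by
  intro p hp p' hp' hpp'
  rw [fanoFn_eq_qaryEntropy, fanoFn_eq_qaryEntropy]
  have hmem : ∀ x ∈ Set.Icc (1 / (C : ℝ)) 1, 1 - x ∈ Set.Icc 0 (1 - 1 / (C : ℝ)) :=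
    fun x hx => ⟨by linarith [hx.2], by linarith [hx.1]⟩
  gcongr
  exact qaryEntropy_strictMonoOn hC (hmem p' hp') (hmem p hp) (by linarith)

theorem stmt_8_general (Cr Cs : ℕ) (h2 : 2 ≤ Cr) (hrs : Cr ≤ Cs)
    (S : ℝ)
    (Pr Ps : ℝ)
    (hPr : Pr ∈ Set.Icc (1 / (Cr : ℝ)) 1) (hfr : fanoFn Cr Pr = S)
    (hPs : Ps ∈ Set.Icc (1 / (Cs : ℝ)) 1) (hfs : fanoFn Cs Ps = S) :
    Pr ≤ Ps := by
  have hPr' : Pr ∈ Set.Icc (1 / (Cs : ℝ)) 1 :=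
    ⟨le_trans (one_div_le_one_div_of_le (by positivity) (by exact_mod_cast hrs)) hPr.1, hPr.2⟩
  by_contra! hlt
  have hdec := fanoFn_strictAntiOn (h2.trans hrs) hPs hPr' hlt
  have hmono := fanoFn_le_fanoFn_of_le h2 hrs hPr.2
  linarith

/-- Let `2 ≤ Cr ≤ Cs` and `S ≥ 0`. If `Pr ∈ [1/Cr, 1]` solves
`S_F(Pr; Cr) = S` and `Ps ∈ [1/Cs, 1]` solves `S_F(Ps; Cs) = S`, then `Pr ≤ Ps`:
a smaller candidate-set size tightens the Fano predictability upper bound. -/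
theorem stmt_8 (Cr Cs : ℕ) (h2 : 2 ≤ Cr) (hrs : Cr ≤ Cs)
    (S : ℝ) (hS : 0 ≤ S)
    (Pr Ps : ℝ)
    (hPr : Pr ∈ Set.Icc (1 / (Cr : ℝ)) 1) (hfr : fanoFn Cr Pr = S)
    (hPs : Ps ∈ Set.Icc (1 / (Cs : ℝ)) 1) (hfs : fanoFn Cs Ps = S) :
    Pr ≤ Ps :=
  stmt_8_general Cr Cs h2 hrs S Pr Ps hPr hfr hPs hfs
end

section
/- Let G be a finite simple graph with N ≥ 1 vertices and M edges such that 2M ≥ N, let A be its adjacency matrix over ℝ, and let λ_1, …, λ_N be the eigenvalues of A counted with multiplicity. Then the graph energy satisfies the Koolen–Moulton bound E(G) = Σ_{i=1}^{N} |λ_i| ≤ 2M/N + √((N−1)·(2M − (2M/N)²)). -/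
/-!
Let `μ` be the largest eigenvalue of `A`. Testing `A` against the all-ones vector gives
`μ ≥ 2M/N`, and `∑ λᵢ² = tr A² = 2M`. Cauchy–Schwarz on the remaining `N - 1` eigenvalues
bounds the energy by `μ + √((N - 1)(2M - μ²))`, and `x ↦ x + √((N - 1)(2M - x²))` is
decreasing for `x² ≥ 2M/N`, a range which contains `2M/N` exactly when `2M ≥ N`.
-/

open Matrix Finset

theorem add_sqrt_mul_sub_sq_le {c S x y : ℝ} (hc : 0 ≤ c) (hy : 0 ≤ y) (hyx : y ≤ x)
    (hxS : x ^ 2 ≤ S) (hS : S ≤ (c + 1) * y ^ 2) :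
    x + √(c * (S - x ^ 2)) ≤ y + √(c * (S - y ^ 2)) := by
  set a := √(c * (S - x ^ 2))
  set b := √(c * (S - y ^ 2))
  have ha : 0 ≤ a := Real.sqrt_nonneg _
  have ha2 : a ^ 2 = c * (S - x ^ 2) := Real.sq_sqrt (mul_nonneg hc (by linarith))
  have hb2 : b ^ 2 = c * (S - y ^ 2) := Real.sq_sqrt (mul_nonneg hc (by nlinarith))
  have hab : a ≤ b := Real.sqrt_le_sqrt (by gcongr)
  have hb : b ≤ c * y := Real.sqrt_le_iff.mpr ⟨by positivity, by nlinarith⟩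
  -- from `b² - a² = c (x² - y²)` and `a + b ≤ c (x + y)`
  have key : (x - y) * (a + b) ≤ (b - a) * (a + b) := by
    nlinarith [mul_le_mul_of_nonneg_left (show a + b ≤ c * (x + y) by nlinarith) (sub_nonneg.mpr hyx)]
  rcases (add_nonneg ha (ha.trans hab)).eq_or_lt with h0 | hpos
  · have hxy : x ^ 2 ≤ y ^ 2 := by
      rcases hc.eq_or_lt with rfl | hc0
      · linarith
      · nlinarith
    nlinarith [(pow_le_pow_iff_left₀ (hy.trans hyx) hy two_ne_zero).mp hxy]
  · nlinarith [le_of_mul_le_mul_right key hpos]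

theorem Finset.sum_abs_le_add_sqrt {ι : Type*} [DecidableEq ι] {s : Finset ι} {f : ι → ℝ} {i : ι}
    (hi : i ∈ s) (hfi : 0 ≤ f i) :
    ∑ j ∈ s, |f j| ≤ f i + √((#s - 1) * (∑ j ∈ s, f j ^ 2 - f i ^ 2)) := by
  rw [← add_sum_erase s _ hi, ← add_sum_erase s _ hi, abs_of_nonneg hfi, add_sub_cancel_left,
    ← Nat.cast_pred (card_pos.mpr ⟨i, hi⟩), ← card_erase_of_mem hi]
  gcongr
  apply Real.le_sqrt_of_sq_le
  simpa only [sq_abs] using sq_sum_le_card_mul_sum_sq (s := s.erase i) (f := fun j ↦ |f j|)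

namespace Matrix.IsHermitian

variable {n 𝕜 : Type*} [Fintype n] [DecidableEq n] [RCLike 𝕜] {A : Matrix n n 𝕜}

open scoped MatrixOrder in
theorem re_dotProduct_mulVec_le (hA : A.IsHermitian) {μ : ℝ}
    (hμ : ∀ i, hA.eigenvalues i ≤ μ) (x : n → 𝕜) :
    RCLike.re (star x ⬝ᵥ A *ᵥ x) ≤ μ * RCLike.re (star x ⬝ᵥ x) := by
  have hle : A ≤ algebraMap ℝ _ μ := le_algebraMap_of_spectrum_le (by
    rw [hA.spectrum_real_eq_range_eigenvalues]
    rintro _ ⟨i, rfl⟩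
    exact hμ i) hA.isSelfAdjoint
  simpa [sub_mulVec, dotProduct_sub, Algebra.algebraMap_eq_smul_one, smul_mulVec, dotProduct_smul,
    RCLike.smul_re] using (Matrix.le_iff.mp hle).re_dotProduct_nonneg x

theorem trace_mul_self (hA : A.IsHermitian) :
    (A * A).trace = ∑ i, ((hA.eigenvalues i ^ 2 : ℝ) : 𝕜) := by
  conv_lhs => rw [hA.spectral_theorem, ← map_mul, Unitary.conjStarAlgAut_apply, trace_mul_cycle,
    Unitary.coe_star_mul_self, one_mul, diagonal_mul_diagonal, trace_diagonal]
  simp [sq]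

end Matrix.IsHermitian

namespace SimpleGraph

variable {V α : Type*} [Fintype V] (G : SimpleGraph V) [DecidableRel G.Adj]

theorem trace_adjMatrix_mul_self [NonAssocSemiring α] :
    (G.adjMatrix α * G.adjMatrix α).trace = 2 * #G.edgeFinset := by
  simp only [trace, diag_apply, adjMatrix_mul_self_apply_self]
  rw [← Nat.cast_sum, G.sum_degrees_eq_twice_card_edges, Nat.cast_mul, Nat.cast_two]

theorem one_dotProduct_adjMatrix_mulVec_one [NonAssocSemiring α] :
    1 ⬝ᵥ G.adjMatrix α *ᵥ 1 = 2 * #G.edgeFinset := by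
  simp only [one_dotProduct, adjMatrix_mulVec_apply, Pi.one_apply, sum_const,
    card_neighborFinset_eq_degree, nsmul_one]
  rw [← Nat.cast_sum, G.sum_degrees_eq_twice_card_edges, Nat.cast_mul, Nat.cast_two]

variable [DecidableEq V] {G} (hA : (G.adjMatrix ℝ).IsHermitian)
include hA

theorem sum_sq_eigenvalues_adjMatrix : ∑ i, hA.eigenvalues i ^ 2 = 2 * #G.edgeFinset := by
  simpa using hA.trace_mul_self.symm.trans (G.trace_adjMatrix_mul_self (α := ℝ))

theorem two_mul_card_edgeFinset_le_mul_card {μ : ℝ} (hμ : ∀ i, hA.eigenvalues i ≤ μ) :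
    2 * (#G.edgeFinset : ℝ) ≤ μ * Fintype.card V := by
  simpa [G.one_dotProduct_adjMatrix_mulVec_one] using hA.re_dotProduct_mulVec_le hμ 1

end SimpleGraph

/-- **Koolen–Moulton bound.** For a finite simple graph `G` with `N ≥ 1`
vertices and `M` edges such that `2M ≥ N`, with real symmetric adjacency matrix `A` and
eigenvalues `λ₁, …, λ_N` (counted with multiplicity), the graph energy satisfies
`E(G) = ∑ i, |λ i| ≤ 2M/N + √((N-1)·(2M - (2M/N)²))`. -/
theorem stmt_14 {V : Type*} [Fintype V] [DecidableEq V]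
    (G : SimpleGraph V) [DecidableRel G.Adj]
    (N M : ℕ) (hN : N = Fintype.card V) (hM : M = G.edgeFinset.card)
    (hN1 : 1 ≤ N) (h2M : N ≤ 2 * M)
    (hA : (G.adjMatrix ℝ).IsHermitian) :
    ∑ i, |hA.eigenvalues i| ≤
      2 * (M : ℝ) / (N : ℝ) +
        Real.sqrt (((N : ℝ) - 1) * (2 * (M : ℝ) - (2 * (M : ℝ) / (N : ℝ)) ^ 2)) := by
  have hNpos : (0 : ℝ) < N := by exact_mod_cast hN1
  obtain ⟨i₀, -, hmax⟩ := exists_max_image univ hA.eigenvalues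
    (univ_nonempty_iff.mpr (Fintype.card_pos_iff.mp (hN ▸ hN1)))
  set μ := hA.eigenvalues i₀
  have hsum_sq : ∑ i, hA.eigenvalues i ^ 2 = 2 * M := by
    rw [hM]; exact SimpleGraph.sum_sq_eigenvalues_adjMatrix hA
  have hμ : 2 * (M : ℝ) / N ≤ μ := by
    rw [div_le_iff₀ hNpos, hN, hM]
    exact SimpleGraph.two_mul_card_edgeFinset_le_mul_card hA fun i ↦ hmax i (mem_univ i)
  have hμ_sq : μ ^ 2 ≤ 2 * M :=
    hsum_sq ▸ single_le_sum (fun i _ ↦ sq_nonneg (hA.eigenvalues i)) (mem_univ i₀)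
  have hd_nonneg : 0 ≤ 2 * (M : ℝ) / N := by positivity
  have hd_ge_one : 1 ≤ 2 * (M : ℝ) / N := by
    rw [le_div_iff₀ hNpos, one_mul]
    exact_mod_cast h2M
  calc ∑ i, |hA.eigenvalues i|
      ≤ μ + √((N - 1) * (2 * M - μ ^ 2)) := by
        simpa [hsum_sq, ← hN] using
          sum_abs_le_add_sqrt (f := hA.eigenvalues) (mem_univ i₀) (hd_nonneg.trans hμ)
    _ ≤ _ := by
        refine add_sqrt_mul_sub_sq_le (sub_nonneg.mpr (by exact_mod_cast hN1)) hd_nonneg hμ hμ_sq ?_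
        rw [sub_add_cancel, sq, ← mul_assoc, mul_div_cancel₀ _ hNpos.ne']
        exact le_mul_of_one_le_right (by positivity) hd_ge_one
end
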